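/- arXiv:1001.0314 — 4 statements merged into one kernel-verified Lean document; each statement's English description precedes it below -/
import Mathlib

section
/- If F_1, F_2 : \mathbb{N}_{\geq 1} \to \mathbb{N} satisfy F_j(n) = \sum_{d|n} d \cdot O_j(d) for j = 1,2, and O(n) is defined by the Möbius inversion of the product F(n) = F_1(n) F_2(n), then O(n) = \sum_{lcm(d_1,d_2) = n} gcd(d_1, d_2) O_1(d_1) O_2(d_2). -/
open ArithmeticFunction
open scoped ArithmeticFunction.Moebius

/-!
Write `O'(n) = ∑_{lcm(a,b) = n} gcd(a,b) O₁(a) O₂(b)`. Since `lcm(a,b) · gcd(a,b) = a b`, grouping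
the pairs `(a, b)` of divisors of `m` by `d = lcm(a,b)` turns the product
`F₁(m) F₂(m) = ∑_{a,b ∣ m} a O₁(a) · b O₂(b)` into `∑_{d ∣ m} d O'(d)`. So `n O'(n)` and `n O(n)`
are both the Möbius inversion of `F₁ F₂`, and dividing by `n` gives `O = O'`.
-/

open Finset

section LcmGcdConvolution

variable {R : Type*} [CommSemiring R]

def lcmGcdConvolution (f g : ℕ → R) (n : ℕ) : R :=
  ∑ p ∈ (n.divisors ×ˢ n.divisors).filter (fun p => Nat.lcm p.1 p.2 = n),
    (Nat.gcd p.1 p.2 : R) * f p.1 * g p.2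

theorem filter_lcm_eq_divisors_product_of_mem_divisors {d m : ℕ} (hd : d ∈ m.divisors) :
    (d.divisors ×ˢ d.divisors).filter (fun p => Nat.lcm p.1 p.2 = d) =
      (m.divisors ×ˢ m.divisors).filter (fun p => Nat.lcm p.1 p.2 = d) := by
  obtain ⟨hdm, hm⟩ := Nat.mem_divisors.mp hd
  have hd₀ : d ≠ 0 := (Nat.pos_of_mem_divisors hd).ne'
  ext ⟨a, b⟩
  simp only [mem_filter, mem_product, Nat.mem_divisors]
  constructor
  · rintro ⟨⟨⟨ha, -⟩, hb, -⟩, hlcm⟩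
    exact ⟨⟨⟨ha.trans hdm, hm⟩, hb.trans hdm, hm⟩, hlcm⟩
  · rintro ⟨-, hlcm⟩
    exact ⟨⟨⟨hlcm ▸ Nat.dvd_lcm_left a b, hd₀⟩, hlcm ▸ Nat.dvd_lcm_right a b, hd₀⟩, hlcm⟩

theorem natCast_mul_lcmGcdConvolution (f g : ℕ → R) (n : ℕ) :
    (n : R) * lcmGcdConvolution f g n =
      ∑ p ∈ (n.divisors ×ˢ n.divisors).filter (fun p => Nat.lcm p.1 p.2 = n),
        (p.1 * f p.1) * (p.2 * g p.2) := by
  rw [lcmGcdConvolution, mul_sum]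
  refine sum_congr rfl fun ⟨a, b⟩ hab => ?_
  have hlcm : Nat.lcm a b = n := (mem_filter.mp hab).2
  have hgcd_lcm : (n : R) * Nat.gcd a b = a * b := by
    rw [← hlcm, ← Nat.cast_mul, mul_comm, Nat.gcd_mul_lcm, Nat.cast_mul]
  calc (n : R) * ((Nat.gcd a b : R) * f a * g b) = ((n : R) * Nat.gcd a b) * f a * g b := by ring
    _ = (a * f a) * (b * g b) := by rw [hgcd_lcm]; ring

theorem sum_divisors_mul_sum_divisors_eq_sum_fiberwise_lcm (u v : ℕ → R) (m : ℕ) :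
    (∑ a ∈ m.divisors, u a) * (∑ b ∈ m.divisors, v b) =
      ∑ d ∈ m.divisors, ∑ p ∈ (m.divisors ×ˢ m.divisors).filter (fun p => Nat.lcm p.1 p.2 = d),
        u p.1 * v p.2 := by
  have hlcm_mem : ∀ p ∈ m.divisors ×ˢ m.divisors, Nat.lcm p.1 p.2 ∈ m.divisors := by
    intro p hp
    obtain ⟨ha, hb⟩ := mem_product.mp hp
    exact Nat.mem_divisors.mpr
      ⟨Nat.lcm_dvd (Nat.dvd_of_mem_divisors ha) (Nat.dvd_of_mem_divisors hb),
        (Nat.mem_divisors.mp ha).2⟩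
  rw [sum_fiberwise_of_maps_to hlcm_mem (fun p => u p.1 * v p.2), sum_mul_sum, ← sum_product']

theorem sum_divisors_natCast_mul_lcmGcdConvolution (f g : ℕ → R) (m : ℕ) :
    ∑ d ∈ m.divisors, (d : R) * lcmGcdConvolution f g d =
      (∑ d ∈ m.divisors, (d : R) * f d) * (∑ d ∈ m.divisors, (d : R) * g d) := by
  rw [sum_divisors_mul_sum_divisors_eq_sum_fiberwise_lcm]
  refine sum_congr rfl fun d hd => ?_
  rw [natCast_mul_lcmGcdConvolution, filter_lcm_eq_divisors_product_of_mem_divisors hd]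

end LcmGcdConvolution

/-- If `F_j(n) = ∑_{d ∣ n} d · O_j(d)` for `j = 1, 2` and `O` is defined by Möbius
inversion of the product `F(n) = F₁(n)·F₂(n)`, then
`O(n) = ∑_{lcm(d₁,d₂) = n} gcd(d₁,d₂) O₁(d₁) O₂(d₂)`. -/
theorem orbit_count_of_product (F₁ F₂ O₁ O₂ : ℕ → ℕ)
    (hF₁ : ∀ n : ℕ, 1 ≤ n → F₁ n = ∑ d ∈ n.divisors, d * O₁ d)
    (hF₂ : ∀ n : ℕ, 1 ≤ n → F₂ n = ∑ d ∈ n.divisors, d * O₂ d)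
    (O : ℕ → ℤ)
    (hO : ∀ n : ℕ, 1 ≤ n →
      (n : ℤ) * O n = ∑ d ∈ n.divisors, (μ (n / d) : ℤ) * (F₁ d * F₂ d))
    (n : ℕ) (hn : 1 ≤ n) :
    O n = ∑ p ∈ (n.divisors ×ˢ n.divisors).filter (fun p => Nat.lcm p.1 p.2 = n),
      (Nat.gcd p.1 p.2 : ℤ) * O₁ p.1 * O₂ p.2 := by
  set O' := lcmGcdConvolution (fun d => (O₁ d : ℤ)) (fun d => (O₂ d : ℤ))
  have hF : ∀ m > 0, ∑ d ∈ m.divisors, ((d : ℕ) : ℤ) * O' d = (F₁ m : ℤ) * F₂ m := by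
    intro m hm
    rw [sum_divisors_natCast_mul_lcmGcdConvolution, hF₁ m hm, hF₂ m hm]
    push_cast
    rfl
  have hinv : ∑ d ∈ n.divisors, (μ (n / d) : ℤ) * (F₁ d * F₂ d) = n * O' n := by
    rw [← Nat.sum_divisorsAntidiagonal' (f := fun a b => (μ a : ℤ) * ((F₁ b : ℤ) * F₂ b))]
    simpa only [Int.cast_id] using sum_eq_iff_sum_mul_moebius_eq.mp hF n hn
  exact mul_left_cancel₀ (Nat.cast_ne_zero.mpr (by omega)) ((hO n hn).trans hinv)
end

section
/- If a non-degenerate exponential sum F(n) = \sum_{i=1}^r \beta_i^n - \sum_{i=1}^s \alpha_i^n with complex \alpha_i, \beta_j satisfies F(n) \geq 0 for all n \geq 1 and F(n) does not eventually vanish, then \max_i |\beta_i| \geq \max_i |\alpha_i|. -/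
/-!
If every `‖βᵢ‖` were smaller than `a = max ‖αⱼ‖`, then `∑ βᵢⁿ = o(aⁿ)`, and `F(n) ≥ 0` would give
`Re ∑ αⱼⁿ ≤ aⁿ / 4` for all large `n`. But the ratios `αⱼ / a` of modulus one form an element of
the compact group `Circleᵏ`, whose powers return to every neighbourhood of `1` infinitely often,
while the powers of the other ratios tend to `0`; hence `Re ∑ αⱼⁿ ≥ aⁿ / 2` for infinitely many `n`.
-/

open Complex

open Filter Topology Asymptotics

theorem Circle.frequently_forall_norm_pow_sub_one_lt {σ : Type*} [Finite σ] (v : σ → Circle)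
    {ε : ℝ} (hε : 0 < ε) : ∃ᶠ n in atTop, ∀ j, ‖(v j : ℂ) ^ n - 1‖ < ε := by
  have hU : {g : σ → Circle | ∀ j, ‖(g j : ℂ) - 1‖ < ε} ∈ 𝓝 1 := by
    refine eventually_all.2 fun j => ?_
    have hcont : Continuous fun g : σ → Circle => ‖(g j : ℂ) - 1‖ := by fun_prop
    simpa using hcont.tendsto 1 |>.eventually (gt_mem_nhds (by simpa using hε))
  simpa using (mapClusterPt_one_atTop_pow v).frequently hU

theorem frequently_half_le_re_sum_pow {σ : Type*} [Fintype σ] (u : σ → ℂ)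
    (hu : ∀ j, ‖u j‖ ≤ 1) (hu₁ : ∃ j, ‖u j‖ = 1) :
    ∃ᶠ n in atTop, 1 / 2 ≤ (∑ j, u j ^ n).re := by
  classical
  set S := Finset.univ.filter fun j => ‖u j‖ = 1
  set T := Finset.univ.filter fun j => ¬‖u j‖ = 1
  have hS : (1 : ℝ) ≤ S.card := by
    obtain ⟨j, hj⟩ := hu₁
    exact_mod_cast Finset.card_pos.2 ⟨j, by simpa [S] using hj⟩
  have hrec := Circle.frequently_forall_norm_pow_sub_one_lt
    (fun j : {j // ‖u j‖ = 1} => ⟨u j, mem_sphere_zero_iff_norm.2 j.2⟩) (ε := 1 / 4)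
    (by norm_num)
  have hdecay : Tendsto (fun n => ∑ j ∈ T, u j ^ n) atTop (𝓝 0) := by
    simpa using tendsto_finsetSum _ fun j hj => tendsto_pow_atTop_nhds_zero_of_norm_lt_one
      ((hu j).lt_of_ne (Finset.mem_filter.1 hj).2)
  refine (hrec.and_eventually (hdecay.eventually (Metric.ball_mem_nhds 0
    (by norm_num : (0 : ℝ) < 1 / 4)))).mono ?_
  rintro n ⟨hnear, hsmall⟩
  have hunit : (S.card : ℝ) * (3 / 4) ≤ (∑ j ∈ S, u j ^ n).re := by
    rw [re_sum, ← nsmul_eq_mul, ← Finset.sum_const]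
    refine Finset.sum_le_sum fun j hj => ?_
    have hj : ‖u j ^ n - 1‖ < 1 / 4 := hnear ⟨j, (Finset.mem_filter.1 hj).2⟩
    have hre := re_le_norm (1 - u j ^ n)
    rw [norm_sub_rev, sub_re, one_re] at hre
    linarith
  have hrest := neg_le_of_abs_le (abs_re_le_norm (∑ j ∈ T, u j ^ n))
  rw [dist_zero_right] at hsmall
  rw [← Finset.sum_filter_add_sum_filter_not Finset.univ (fun j => ‖u j‖ = 1), add_re]
  linarith

theorem frequently_norm_pow_div_two_le_re_sum_pow {σ : Type*} [Fintype σ] (u : σ → ℂ) (j₀ : σ)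
    (hj₀ : ∀ j, ‖u j‖ ≤ ‖u j₀‖) (h0 : u j₀ ≠ 0) :
    ∃ᶠ n in atTop, ‖u j₀‖ ^ n / 2 ≤ (∑ j, u j ^ n).re := by
  set r := ‖u j₀‖
  have hr : 0 < r := norm_pos_iff.2 h0
  have hnorm : ∀ j, ‖u j / r‖ = ‖u j‖ / r := fun j => by
    rw [norm_div, norm_real, Real.norm_of_nonneg hr.le]
  refine (frequently_half_le_re_sum_pow (fun j => u j / r)
    (fun j => by rw [hnorm, div_le_one hr]; exact hj₀ j)
    ⟨j₀, by rw [hnorm, div_self hr.ne']⟩).mono fun n hn => ?_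
  have hscale : (∑ j, (u j / r) ^ n).re = (∑ j, u j ^ n).re / r ^ n := by
    simp only [div_pow, ← Finset.sum_div, ← ofReal_pow, div_ofReal_re]
  rw [hscale, le_div_iff₀ (pow_pos hr n)] at hn
  linarith

theorem isLittleO_sum_pow {𝕜 ι : Type*} [NormedDivisionRing 𝕜] [Fintype ι] (β : ι → 𝕜) {r : ℝ}
    (h : ∀ i, ‖β i‖ < r) : (fun n : ℕ => ∑ i, β i ^ n) =o[atTop] fun n => r ^ n :=
  IsLittleO.fun_sum fun i _ => IsLittleO.of_norm_left <| by
    simpa only [norm_pow] using isLittleO_pow_pow_of_lt_left (norm_nonneg _) (h i)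

theorem dominant_pole_of_nonneg_exponential_sum_general
    {ι κ : Type*} [Fintype ι] [Fintype κ] [Nonempty κ]
    (β : ι → ℂ) (α : κ → ℂ)
    (F : ℕ → ℂ)
    (hF : ∀ n : ℕ, F n = (∑ i, β i ^ n) - ∑ j, α j ^ n)
    (hreal : ∀ n : ℕ, 1 ≤ n → (F n).im = 0 ∧ 0 ≤ (F n).re) :
    (⨆ j, ‖α j‖) ≤ ⨆ i, ‖β i‖ := by
  by_contra! hlt
  obtain ⟨j₀, hj₀⟩ := Finite.exists_max fun j => ‖α j‖
  have hsup_lt : ⨆ i, ‖β i‖ < ‖α j₀‖ := hlt.trans_le (ciSup_le hj₀)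
  have hpos : 0 < ‖α j₀‖ := (Real.iSup_nonneg fun i => norm_nonneg (β i)).trans_lt hsup_lt
  have hβ : ∀ i, ‖β i‖ < ‖α j₀‖ := fun i => (le_ciSup (Finite.bddAbove_range _) i).trans_lt hsup_lt
  obtain ⟨n, hα_large, hβ_small, hn⟩ :=
    ((frequently_norm_pow_div_two_le_re_sum_pow α j₀ hj₀ (norm_pos_iff.1 hpos)).and_eventually
      (((isLittleO_sum_pow β hβ).bound (by norm_num : (0 : ℝ) < 1 / 4)).and
        (eventually_ge_atTop 1))).exists
  have hFn := (hreal n hn).2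
  rw [hF, sub_re] at hFn
  rw [norm_pow, Real.norm_of_nonneg hpos.le] at hβ_small
  linarith [re_le_norm (∑ i, β i ^ n), pow_pos hpos n]

/-- If a non-degenerate exponential sum `F(n) = ∑ᵢ βᵢⁿ - ∑ⱼ αⱼⁿ` (all `αⱼ, βᵢ` nonzero
and no ratio of two of them is a root of unity other than `1`) is real and nonnegative
for all `n ≥ 1` and does not eventually vanish, then `max |βᵢ| ≥ max |αⱼ|`.
The Evertse / van der Poorten–Schlickewei `S`-unit bound is taken as a black box. -/
theorem dominant_pole_of_nonneg_exponential_sum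
    {ι κ : Type*} [Fintype ι] [Fintype κ] [Nonempty ι] [Nonempty κ]
    (β : ι → ℂ) (α : κ → ℂ)
    (hβ0 : ∀ i, β i ≠ 0) (hα0 : ∀ j, α j ≠ 0)
    (hββ : ∀ i i', i ≠ i' → ∀ n : ℕ, 0 < n → (β i / β i') ^ n ≠ 1)
    (hαα : ∀ j j', j ≠ j' → ∀ n : ℕ, 0 < n → (α j / α j') ^ n ≠ 1)
    (hβα : ∀ i j, (∀ n : ℕ, 0 < n → (β i / α j) ^ n ≠ 1))
    (F : ℕ → ℂ)
    (hF : ∀ n : ℕ, F n = (∑ i, β i ^ n) - ∑ j, α j ^ n)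
    (hreal : ∀ n : ℕ, 1 ≤ n → (F n).im = 0 ∧ 0 ≤ (F n).re)
    (hnotvanish : ¬ ∃ N : ℕ, ∀ n ≥ N, F n = 0)
    (hEvertse : ∀ ε : ℝ, 0 < ε → ∃ N : ℕ, ∀ n ≥ N,
      (⨆ i, ‖β i‖) ^ ((n : ℝ) * (1 - ε)) ≤ ‖∑ i, β i ^ n‖) :
    (⨆ j, ‖α j‖) ≤ ⨆ i, ‖β i‖ :=
  dominant_pole_of_nonneg_exponential_sum_general β α F hF hreal
end

section
/- Let T have exactly one closed orbit of each length, so F_T(n) = \sigma_1(n). Then the orbit Dirichlet series of T \times T satisfies, for \Re(s) > 2: \sum_{n\geq 1} O_{T\times T}(n) n^{-s} = \zeta(s)^2 \zeta(s-1) / \zeta(2s), where O_{T\times T}(n) = (1/n)\sum_{d|n} \mu(n/d) \sigma_1(d)^2. -/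
/-!
Writing `O(n) = (1/n) (μ ⋆ σ₁²)(n)`, the Ramanujan-type identity `μ ⋆ σ₁² = n · (σ₁ ⋆ μ²)` shows
that `O = σ₁ ⋆ μ²`. Both sides are multiplicative, and on prime powers the identity is the
difference of squares `σ₁(p^(k+1))² - σ₁(p^k)² = p^(k+1) (σ₁(p^(k+1)) + σ₁(p^k))`. Hence the
orbit Dirichlet series is `L(σ₁, s) L(μ², s)`, where `L(σ₁, s) = ζ(s) ζ(s-1)` from `σ₁ = 1 ⋆ id`,
and `L(μ², s) = ζ(s) / ζ(2s)` from `μ² ⋆ 1_{squares} = 1`, i.e. every `n` is uniquely a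
squarefree number times a square.
-/

open ArithmeticFunction
open scoped ArithmeticFunction.sigma ArithmeticFunction.Moebius ArithmeticFunction.zeta
open scoped LSeries.notation

theorem Nat.Prime.isSquare_pow_iff {p k : ℕ} (hp : p.Prime) : IsSquare (p ^ k) ↔ Even k := by
  refine ⟨fun ⟨c, hc⟩ => ?_, fun hk => hk.isSquare_pow p⟩
  obtain ⟨j, -, rfl⟩ := (Nat.dvd_prime_pow hp).1 (Dvd.intro_left c hc.symm)
  rw [← pow_add] at hc
  exact ⟨j, Nat.pow_right_injective hp.two_le hc⟩

theorem Nat.Coprime.isSquare_mul_iff {m n : ℕ} (h : m.Coprime n) :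
    IsSquare (m * n) ↔ IsSquare m ∧ IsSquare n := by
  refine ⟨fun ⟨c, hc⟩ => ?_, fun ⟨hm, hn⟩ => hm.mul hn⟩
  rw [← sq] at hc
  obtain ⟨a, ha⟩ := exists_eq_pow_of_mul_eq_pow (Nat.isUnit_iff.2 h) hc
  obtain ⟨b, hb⟩ := exists_eq_pow_of_mul_eq_pow (Nat.isUnit_iff.2 h.symm) ((mul_comm n m).trans hc)
  exact ⟨⟨a, ha.trans (sq a)⟩, ⟨b, hb.trans (sq b)⟩⟩

namespace LSeries

theorem term_natCast_mul (f : ℕ → ℂ) (s : ℂ) (n : ℕ) :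
    term (fun n => n * f n) s n = term f (s - 1) n := by
  rcases eq_or_ne n 0 with rfl | hn
  · simp
  have hn' : (n : ℂ) ≠ 0 := Nat.cast_ne_zero.2 hn
  rw [term_of_ne_zero hn, term_of_ne_zero hn, Complex.cpow_sub _ _ hn', Complex.cpow_one]
  field_simp

theorem LSeriesSummable_natCast_mul_iff {f : ℕ → ℂ} {s : ℂ} :
    LSeriesSummable (fun n => n * f n) s ↔ LSeriesSummable f (s - 1) := by
  simp only [LSeriesSummable, funext (term_natCast_mul f s)]

theorem LSeries_natCast_mul (f : ℕ → ℂ) (s : ℂ) :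
    LSeries (fun n => n * f n) s = LSeries f (s - 1) := by
  simp only [LSeries, term_natCast_mul]

theorem term_ite_isSquare_sq (f : ℕ → ℂ) (s : ℂ) (m : ℕ) :
    term (fun n => if IsSquare n then f n.sqrt else 0) s (m ^ 2) = term f (2 * s) m := by
  rcases eq_or_ne m 0 with rfl | hm
  · simp
  rw [term_of_ne_zero (pow_ne_zero 2 hm), term_of_ne_zero hm, if_pos (IsSquare.sq m),
    Nat.sqrt_eq', Nat.cast_pow, ← Complex.natCast_cpow_natCast_mul, Nat.cast_ofNat]

theorem LSeries_ite_isSquare (f : ℕ → ℂ) (s : ℂ) :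
    LSeries (fun n => if IsSquare n then f n.sqrt else 0) s = LSeries f (2 * s) := by
  have hsupp : (term (fun n => if IsSquare n then f n.sqrt else 0) s).support ⊆
      Set.range (· ^ 2) := by
    intro n hn
    by_cases hsq : IsSquare n
    · obtain ⟨r, rfl⟩ := hsq
      exact ⟨r, sq r⟩
    · simp [term, hsq] at hn
  rw [LSeries, ← (Nat.pow_left_injective two_ne_zero).tsum_eq hsupp]
  exact tsum_congr (term_ite_isSquare_sq f s)

end LSeries

namespace ArithmeticFunction

variable {R : Type*}

theorem mul_apply_prime_pow_succ [Semiring R] {f g : ArithmeticFunction R} {p : ℕ}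
    (hp : p.Prime) (hf₁ : f 1 = 1) (hf : ∀ k, 2 ≤ k → f (p ^ k) = 0) (j : ℕ) :
    (f * g) (p ^ (j + 1)) = g (p ^ (j + 1)) + f p * g (p ^ j) := by
  rw [mul_apply, Nat.sum_divisorsAntidiagonal (fun x y => f x * g y),
    Nat.sum_divisors_prime_pow hp, Finset.sum_range_succ', Finset.sum_range_succ',
    Finset.sum_eq_zero fun i _ => by rw [hf (i + 1 + 1) (by omega), zero_mul]]
  simp [hf₁, hp.pos, pow_succ, add_comm]

theorem coe_moebius_apply_prime_pow [Ring R] {p k : ℕ} (hp : p.Prime) (hk : 2 ≤ k) :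
    (μ : ArithmeticFunction R) (p ^ k) = 0 := by
  rw [intCoe_apply, moebius_apply_prime_pow hp (by omega), if_neg (by omega), Int.cast_zero]

theorem sigma_one_apply_prime_pow_succ {p : ℕ} (hp : p.Prime) (j : ℕ) :
    σ 1 (p ^ (j + 1)) = σ 1 (p ^ j) + p ^ (j + 1) := by
  rw [sigma_one_apply_prime_pow hp, sigma_one_apply_prime_pow hp, Finset.sum_range_succ]

theorem moebius_mul_sigma_one_pmul_sigma_one [CommRing R] :
    (μ : ArithmeticFunction R) * (σ 1 : ArithmeticFunction R).pmul (σ 1) =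
      (ArithmeticFunction.id : ArithmeticFunction R).pmul
        (σ 1 * (μ : ArithmeticFunction R).pmul μ) := by
  have hμ : (μ : ArithmeticFunction R).IsMultiplicative := isMultiplicative_moebius.intCast
  have hσ : (σ 1 : ArithmeticFunction R).IsMultiplicative := isMultiplicative_sigma.natCast
  refine (IsMultiplicative.eq_iff_eq_on_prime_powers _ (hμ.mul (hσ.pmul hσ)) _
    (isMultiplicative_id.natCast.pmul (hσ.mul (hμ.pmul hμ)))).2 fun p k hp => ?_
  rcases k with _ | j
  · simp
  rw [mul_apply_prime_pow_succ hp hμ.map_one (fun k hk => coe_moebius_apply_prime_pow hp hk),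
    pmul_apply (f := (ArithmeticFunction.id : ArithmeticFunction R)),
    mul_comm (σ 1 : ArithmeticFunction R),
    mul_apply_prime_pow_succ hp (by simp [hμ.map_one])
      (fun k hk => by simp [coe_moebius_apply_prime_pow hp hk])]
  simp only [pmul_apply, natCoe_apply, intCoe_apply, id_apply, moebius_apply_prime hp,
    sigma_one_apply_prime_pow_succ hp]
  push_cast
  ring

theorem sum_divisors_moebius_mul_sigma_one_sq [CommRing R] (n : ℕ) :
    ∑ d ∈ n.divisors, (μ (n / d) : R) * (σ 1 d : R) ^ 2 =
      n * (σ 1 * (μ : ArithmeticFunction R).pmul μ) n := by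
  have h := congrArg (· n) (moebius_mul_sigma_one_pmul_sigma_one (R := R))
  rw [pmul_apply, natCoe_apply, id_apply] at h
  rw [← h, mul_apply, Nat.sum_divisorsAntidiagonal'
    (fun a b => (μ : ArithmeticFunction R) a * ((σ 1 : ArithmeticFunction R).pmul (σ 1)) b)]
  simp [sq]

def squareIndicator (R : Type*) [Zero R] [One R] : ArithmeticFunction R :=
  ⟨fun n => if n ≠ 0 ∧ IsSquare n then 1 else 0, by simp⟩

theorem squareIndicator_apply [Zero R] [One R] (n : ℕ) :
    squareIndicator R n = if n ≠ 0 ∧ IsSquare n then 1 else 0 := rfl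

theorem isMultiplicative_squareIndicator [MonoidWithZero R] :
    (squareIndicator R).IsMultiplicative := by
  refine ⟨by simp [squareIndicator_apply], fun {m n} h => ?_⟩
  simp only [squareIndicator_apply, mul_ne_zero_iff, h.isSquare_mul_iff]
  split_ifs <;> simp_all

theorem squareIndicator_apply_prime_pow [Zero R] [One R] {p k : ℕ} (hp : p.Prime) :
    squareIndicator R (p ^ k) = if Even k then 1 else 0 := by
  simp [squareIndicator_apply, hp.ne_zero, hp.isSquare_pow_iff]

theorem moebius_sq_mul_squareIndicator [CommRing R] :
    (μ : ArithmeticFunction R).pmul μ * squareIndicator R = ζ := by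
  have hμ : (μ : ArithmeticFunction R).IsMultiplicative := isMultiplicative_moebius.intCast
  refine (IsMultiplicative.eq_iff_eq_on_prime_powers _
    ((hμ.pmul hμ).mul isMultiplicative_squareIndicator) _ isMultiplicative_zeta.natCast).2
    fun p k hp => ?_
  rw [natCoe_apply, zeta_apply_ne (pow_ne_zero k hp.ne_zero), Nat.cast_one]
  rcases k with _ | j
  · simp [squareIndicator_apply]
  rw [mul_apply_prime_pow_succ hp (by simp [hμ.map_one])
    (fun k hk => by simp [coe_moebius_apply_prime_pow hp hk]),
    squareIndicator_apply_prime_pow hp, squareIndicator_apply_prime_pow hp]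
  rcases Nat.even_or_odd j with hj | hj <;> simp [hj, intCoe_apply, moebius_apply_prime hp]

theorem LSeries_squareIndicator {s : ℂ} (hs : 1 < (2 * s).re) :
    L ↗(squareIndicator ℂ) s = riemannZeta (2 * s) := by
  rw [← LSeries_one_eq_riemannZeta hs, ← LSeries.LSeries_ite_isSquare]
  exact LSeries_congr (fun hn => by simp [squareIndicator_apply, hn]) s

theorem LSeriesSummable_squareIndicator {s : ℂ} (hs : 1 < s.re) :
    LSeriesSummable ↗(squareIndicator ℂ) s :=
  LSeriesSummable_of_bounded_of_one_lt_re (m := 1)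
    (fun n _ => by rw [squareIndicator_apply]; split_ifs <;> simp) hs

theorem LSeriesSummable_moebius_sq {s : ℂ} (hs : 1 < s.re) :
    LSeriesSummable ↗((μ : ArithmeticFunction ℂ).pmul μ) s :=
  LSeriesSummable_of_bounded_of_one_lt_re (m := 1) (fun n _ => by
    have hμ : |(μ n : ℝ)| ≤ 1 := mod_cast abs_moebius_le_one
    rw [pmul_apply, intCoe_apply, norm_mul, Complex.norm_intCast]
    exact mul_le_one₀ hμ (abs_nonneg _) hμ) hs

theorem LSeries_moebius_sq {s : ℂ} (hs : 1 < s.re) :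
    L ↗((μ : ArithmeticFunction ℂ).pmul μ) s = riemannZeta s / riemannZeta (2 * s) := by
  have hs₂ : 1 < (2 * s).re := by simp; linarith
  rw [eq_div_iff (riemannZeta_ne_zero_of_one_lt_re hs₂), ← LSeries_squareIndicator hs₂,
    ← LSeries_mul' (LSeriesSummable_moebius_sq hs) (LSeriesSummable_squareIndicator hs),
    moebius_sq_mul_squareIndicator, ← LSeries_zeta_eq_riemannZeta hs]
  rfl

theorem coe_id_eq_natCast_mul_one :
    ↗(ArithmeticFunction.id : ArithmeticFunction ℂ) = fun n => n * (1 : ℕ → ℂ) n := by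
  ext n
  simp

theorem LSeriesSummable_id {s : ℂ} (hs : 2 < s.re) :
    LSeriesSummable ↗(ArithmeticFunction.id : ArithmeticFunction ℂ) s := by
  rw [coe_id_eq_natCast_mul_one, LSeries.LSeriesSummable_natCast_mul_iff, LSeriesSummable_one_iff,
    Complex.sub_re, Complex.one_re]
  linarith

theorem LSeries_id {s : ℂ} (hs : 2 < s.re) :
    L ↗(ArithmeticFunction.id : ArithmeticFunction ℂ) s = riemannZeta (s - 1) := by
  rw [coe_id_eq_natCast_mul_one, LSeries.LSeries_natCast_mul,
    LSeries_one_eq_riemannZeta (by rw [Complex.sub_re, Complex.one_re]; linarith)]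

theorem LSeriesSummable_coe_zeta {s : ℂ} (hs : 1 < s.re) :
    LSeriesSummable ↗(ζ : ArithmeticFunction ℂ) s :=
  LSeriesSummable_zeta_iff.2 hs

theorem LSeriesSummable_sigma_one {s : ℂ} (hs : 2 < s.re) :
    LSeriesSummable ↗(σ 1 : ArithmeticFunction ℂ) s := by
  rw [← zeta_mul_pow_eq_sigma, pow_one_eq_id, natCoe_mul]
  exact LSeriesSummable_mul (LSeriesSummable_coe_zeta (by linarith)) (LSeriesSummable_id hs)

theorem LSeries_sigma_one {s : ℂ} (hs : 2 < s.re) :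
    L ↗(σ 1 : ArithmeticFunction ℂ) s = riemannZeta s * riemannZeta (s - 1) := by
  rw [← zeta_mul_pow_eq_sigma, pow_one_eq_id, natCoe_mul,
    LSeries_mul' (LSeriesSummable_coe_zeta (by linarith)) (LSeriesSummable_id hs), LSeries_id hs,
    ← LSeries_zeta_eq_riemannZeta (s := s) (by linarith)]
  rfl

end ArithmeticFunction

/-- For a map `T` with exactly one closed orbit of each length (`F_T(n) = σ₁(n)`), the
orbit Dirichlet series of `T × T` satisfies, for `Re s > 2`,
`∑_{n ≥ 1} O_{T×T}(n) n^{-s} = ζ(s)² ζ(s-1)/ζ(2s)`, where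
`O_{T×T}(n) = (1/n) ∑_{d ∣ n} μ(n/d) σ₁(d)²`. -/
theorem double_product_orbit_dirichlet_series (O : ℕ → ℂ)
    (hO : ∀ n : ℕ, 1 ≤ n →
      O n = (1 / (n : ℂ)) * ∑ d ∈ n.divisors, (moebius (n / d) : ℂ) * (sigma 1 d : ℂ) ^ 2)
    (s : ℂ) (hs : 2 < s.re) :
    LSeries O s = riemannZeta s ^ 2 * riemannZeta (s - 1) / riemannZeta (2 * s) := by
  have hO' : ∀ {n : ℕ}, n ≠ 0 → O n = (σ 1 * (μ : ArithmeticFunction ℂ).pmul μ) n := by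
    intro n hn
    rw [hO n (Nat.one_le_iff_ne_zero.2 hn), sum_divisors_moebius_mul_sigma_one_sq]
    field_simp
  rw [LSeries_congr hO', LSeries_mul' (LSeriesSummable_sigma_one hs)
    (LSeriesSummable_moebius_sq (by linarith)), LSeries_sigma_one hs,
    LSeries_moebius_sq (by linarith)]
  ring
end

section
/- Let T have exactly one closed orbit of each length. Then for \Re(s) > 3, the orbit Dirichlet series of T \times T \times T equals \zeta(s)\zeta(s-1)\zeta(s-2) \prod_p \left(1 + (2p+2)p^{-s} + p^{1-2s}\right), where the coefficients are O(n) = (1/n) \sum_{d|n} \mu(n/d) \sigma_1(d)^3. -/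
/-!
`O = (μ * σ₁³) / id` is multiplicative, so its Dirichlet series is the Euler product of its
local factors. At a prime `p`, `p ^ e (p - 1) ^ 3 O(p ^ e) = (p ^ (e + 1) - 1) ^ 3 - (p ^ e - 1) ^ 3`,
so `O(p ^ e)` is a fixed combination of `p ^ (2e)`, `p ^ e` and `1`. Summing the three geometric
series in `X = p ^ (-s)` gives the local factor
`(1 + (2p + 2) X + p X ^ 2) / ((1 - X) (1 - p X) (1 - p ^ 2 X))`, whose denominators are the Euler
factors of `ζ(s)`, `ζ(s - 1)` and `ζ(s - 2)`. Absolute convergence for `Re s > 3` follows from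
`|O(n)| ≤ n ^ 2 (1 + log n) ^ 4`, itself a consequence of `σ₁(n) ≤ n (1 + log n)`.
-/

open ArithmeticFunction LSeries

open scoped ArithmeticFunction.Moebius ArithmeticFunction.sigma

namespace ArithmeticFunction

theorem moebius_mul_apply_prime_pow_succ {R : Type*} [CommRing R] (g : ArithmeticFunction R)
    {p : ℕ} (hp : p.Prime) (k : ℕ) :
    ((μ : ArithmeticFunction R) * g) (p ^ (k + 1)) = g (p ^ (k + 1)) - g (p ^ k) := by
  rw [mul_apply, Nat.sum_divisorsAntidiagonal (fun a b ↦ (μ : ArithmeticFunction R) a * g b),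
    Nat.sum_divisors_prime_pow hp, Finset.sum_range_succ', Finset.sum_range_succ',
    Finset.sum_eq_zero fun i _ ↦ by simp [moebius_apply_prime_pow hp]]
  simp [moebius_apply_prime hp, pow_succ, hp.pos, sub_eq_add_neg, add_comm]

theorem sigma_one_apply_prime_pow_mul_sub_one {R : Type*} [CommRing R] {p : ℕ} (hp : p.Prime)
    (k : ℕ) : (σ 1 (p ^ k) : R) * (p - 1) = p ^ (k + 1) - 1 := by
  rw [sigma_one_apply_prime_pow hp]
  push_cast
  exact geom_sum_mul _ _

theorem sigma_one_le_mul_one_add_log (n : ℕ) : (σ 1 n : ℝ) ≤ n * (1 + Real.log n) :=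
  calc (σ 1 n : ℝ) = ∑ d ∈ n.divisors, ((n / d : ℕ) : ℝ) := by
        rw [sigma_one_apply, Nat.cast_sum, Nat.sum_div_divisors n (fun d ↦ (d : ℝ))]
    _ ≤ ∑ d ∈ Finset.Icc 1 n, (n : ℝ) / d :=
        (Finset.sum_le_sum fun _ _ ↦ Nat.cast_div_le).trans <|
          Finset.sum_le_sum_of_subset_of_nonneg (fun d hd ↦ Finset.mem_Icc.mpr
            ⟨Nat.pos_of_mem_divisors hd, Nat.divisor_le hd⟩) fun _ _ _ ↦ by positivity
    _ = n * harmonic n := by simp [harmonic_eq_sum_Icc, Finset.mul_sum, div_eq_mul_inv]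
    _ ≤ n * (1 + Real.log n) := by gcongr; exact harmonic_le_one_add_log n

theorem IsMultiplicative.LSeries_eulerProduct_hasProd {f : ArithmeticFunction ℂ}
    (hf : f.IsMultiplicative) {s : ℂ} (hsum : LSeriesSummable f s) :
    HasProd (fun p : Nat.Primes ↦ ∑' e, term f s (p ^ e)) (LSeries f s) := by
  refine EulerProduct.eulerProduct_hasProd (by simp [hf.map_one]) (fun {m n} hmn ↦ ?_)
    (summable_norm_iff.mpr hsum) (term_zero f s)
  rcases eq_or_ne m 0 with rfl | hm
  · simp
  rcases eq_or_ne n 0 with rfl | hn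
  · simp
  simp only [term_of_ne_zero (mul_ne_zero hm hn), term_of_ne_zero hm, term_of_ne_zero hn,
    hf.map_mul_of_coprime hmn, Nat.cast_mul, Complex.natCast_mul_natCast_cpow, mul_div_mul_comm]

end ArithmeticFunction

theorem one_add_log_le_mul_rpow {δ : ℝ} (hδ : 0 < δ) {x : ℝ} (hx : 1 ≤ x) :
    1 + Real.log x ≤ (1 + 1 / δ) * x ^ δ := by
  have hlog := Real.log_le_rpow_div (by linarith : 0 ≤ x) hδ
  have hone := Real.one_le_rpow hx hδ.le
  rw [add_mul, one_mul, one_div_mul_eq_div]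
  linarith

theorem norm_natCast_cpow_lt_one {n : ℕ} (hn : 1 < n) {z : ℂ} (hz : z.re < 0) :
    ‖(n : ℂ) ^ z‖ < 1 := by
  rw [Complex.norm_natCast_cpow_of_pos (by omega)]
  exact Real.rpow_lt_one_of_one_lt_of_neg (by exact_mod_cast hn) hz

theorem hasSum_mul_geometric_of_cube_sub_cube {𝕜 : Type*} [NormedField 𝕜] [CompleteSpace 𝕜]
    {a X : 𝕜} {c : ℕ → 𝕜} (ha₀ : a ≠ 0) (ha₁ : a ≠ 1) (hX : ‖X‖ < 1) (haX : ‖a * X‖ < 1)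
    (ha₂X : ‖a ^ 2 * X‖ < 1)
    (hc : ∀ e, c e * a ^ e * (a - 1) ^ 3 = (a ^ (e + 1) - 1) ^ 3 - (a ^ e - 1) ^ 3) :
    HasSum (fun e ↦ c e * X ^ e)
      ((1 - X)⁻¹ * (1 - a * X)⁻¹ * (1 - a ^ 2 * X)⁻¹ * (1 + (2 * a + 2) * X + a * X ^ 2)) := by
  have ha : a - 1 ≠ 0 := sub_ne_zero.mpr ha₁
  have one_sub_ne_zero_of_norm_lt_one {z : 𝕜} (hz : ‖z‖ < 1) : 1 - z ≠ 0 := fun h ↦ by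
    simp [← sub_eq_zero.mp h] at hz
  have hterm (e : ℕ) : c e * X ^ e = (a ^ 2 + a + 1) / (a - 1) ^ 2 * (a ^ 2 * X) ^ e
      - 3 * (a + 1) / (a - 1) ^ 2 * (a * X) ^ e + 3 / (a - 1) ^ 2 * X ^ e := by
    have hce : c e = ((a ^ 2 + a + 1) * (a ^ e) ^ 2 - 3 * (a + 1) * a ^ e + 3) / (a - 1) ^ 2 := by
      rw [eq_div_iff (pow_ne_zero _ ha)]
      apply mul_left_cancel₀ (mul_ne_zero (pow_ne_zero e ha₀) ha)
      linear_combination hc e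
    rw [hce, mul_pow, mul_pow, ← pow_mul, ← pow_mul]
    ring
  have hX₁ := one_sub_ne_zero_of_norm_lt_one hX
  have hX₂ : 1 - X * a ≠ 0 := one_sub_ne_zero_of_norm_lt_one (by rwa [mul_comm])
  have hX₃ : 1 - X * a ^ 2 ≠ 0 := one_sub_ne_zero_of_norm_lt_one (by rwa [mul_comm])
  have hvalue : (1 - X)⁻¹ * (1 - a * X)⁻¹ * (1 - a ^ 2 * X)⁻¹ * (1 + (2 * a + 2) * X + a * X ^ 2)
      = (a ^ 2 + a + 1) / (a - 1) ^ 2 * (1 - a ^ 2 * X)⁻¹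
        - 3 * (a + 1) / (a - 1) ^ 2 * (1 - a * X)⁻¹ + 3 / (a - 1) ^ 2 * (1 - X)⁻¹ := by
    field_simp
    ring
  simp_rw [hterm, hvalue]
  exact (((hasSum_geometric_of_norm_lt_one ha₂X).mul_left _).sub
    ((hasSum_geometric_of_norm_lt_one haX).mul_left _)).add
    ((hasSum_geometric_of_norm_lt_one hX).mul_left _)

theorem multipliable_one_add_prime_cpow {s : ℂ} (hs : 2 < s.re) :
    Multipliable fun p : Nat.Primes ↦
      1 + (2 * p + 2) * (p : ℂ) ^ (-s) + (p : ℂ) ^ (1 - 2 * s) := by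
  simp_rw [add_assoc]
  refine Complex.multipliable_one_add_of_summable (Summable.add ?_ ?_)
  · refine Summable.of_norm_bounded
      ((Nat.Primes.summable_rpow.mpr (by linarith : 1 - s.re < -1)).mul_left 4) fun p ↦ ?_
    have hp : (1 : ℝ) ≤ p := by exact_mod_cast p.prop.one_lt.le
    rw [norm_mul, Complex.norm_natCast_cpow_of_pos p.prop.pos, Complex.neg_re,
      show (2 * (p : ℂ) + 2) = ((2 * p + 2 : ℕ) : ℂ) by push_cast; ring, Complex.norm_natCast,
      Real.rpow_sub (by positivity), Real.rpow_one, Real.rpow_neg (by positivity)]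
    push_cast
    field_simp
    linarith
  · refine Summable.of_norm_bounded
      (Nat.Primes.summable_rpow.mpr (by linarith : 1 - 2 * s.re < -1)) fun p ↦ ?_
    rw [Complex.norm_natCast_cpow_of_pos p.prop.pos]
    simp

noncomputable def tripleOrbitCount : ArithmeticFunction ℂ :=
  ((μ : ArithmeticFunction ℂ) * ((σ 1 : ArithmeticFunction ℕ) : ArithmeticFunction ℂ).ppow 3).pdiv
    ((ArithmeticFunction.id : ArithmeticFunction ℕ) : ArithmeticFunction ℂ)

theorem tripleOrbitCount_apply (n : ℕ) : tripleOrbitCount n =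
    (1 / (n : ℂ)) * ∑ d ∈ n.divisors, (μ (n / d) : ℂ) * (σ 1 d : ℂ) ^ 3 := by
  rw [tripleOrbitCount, pdiv_apply, mul_apply, Nat.sum_divisorsAntidiagonal' fun a b ↦
    (μ : ArithmeticFunction ℂ) a * ((σ 1 : ArithmeticFunction ℕ) : ArithmeticFunction ℂ).ppow 3 b]
  simp [ppow_apply, div_eq_inv_mul]

theorem isMultiplicative_tripleOrbitCount : tripleOrbitCount.IsMultiplicative :=
  (isMultiplicative_moebius.intCast.mul isMultiplicative_sigma.natCast.ppow).pdiv
    isMultiplicative_id.natCast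

theorem tripleOrbitCount_prime_pow {p : ℕ} (hp : p.Prime) (e : ℕ) :
    tripleOrbitCount (p ^ e) * p ^ e * (p - 1) ^ 3 = (p ^ (e + 1) - 1) ^ 3 - (p ^ e - 1) ^ 3 := by
  cases e with
  | zero => simp [isMultiplicative_tripleOrbitCount.map_one]
  | succ e =>
    rw [tripleOrbitCount, pdiv_apply, moebius_mul_apply_prime_pow_succ _ hp]
    simp only [ppow_apply three_pos, natCoe_apply, id_apply, Nat.cast_pow]
    rw [div_mul_cancel₀ _ (pow_ne_zero _ (Nat.cast_ne_zero.mpr hp.ne_zero)), sub_mul,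
      ← mul_pow, ← mul_pow, sigma_one_apply_prime_pow_mul_sub_one hp,
      sigma_one_apply_prime_pow_mul_sub_one hp]

theorem norm_tripleOrbitCount_le (n : ℕ) :
    ‖tripleOrbitCount n‖ ≤ n ^ 2 * (1 + Real.log n) ^ 4 := by
  rcases n.eq_zero_or_pos with rfl | hn
  · simp
  have hlog : 0 ≤ 1 + Real.log n := by have := Real.log_natCast_nonneg n; linarith
  have hσ (d : ℕ) (hd : d ∈ n.divisors) : (σ 1 d : ℝ) ≤ d * (1 + Real.log n) :=
    (sigma_one_le_mul_one_add_log d).trans <| by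
      have hd₀ : (0 : ℝ) < d := by exact_mod_cast Nat.pos_of_mem_divisors hd
      gcongr
      exact_mod_cast Nat.divisor_le hd
  calc ‖tripleOrbitCount n‖
      ≤ (n : ℝ)⁻¹ * ∑ d ∈ n.divisors, (d * (1 + Real.log n)) ^ 3 := by
        rw [tripleOrbitCount_apply, norm_mul, one_div, norm_inv, Complex.norm_natCast]
        gcongr
        refine (norm_sum_le _ _).trans <| Finset.sum_le_sum fun d hd ↦ ?_
        rw [norm_mul, norm_pow, Complex.norm_intCast, Complex.norm_natCast]
        calc |(μ (n / d) : ℝ)| * (σ 1 d : ℝ) ^ 3 ≤ 1 * (σ 1 d : ℝ) ^ 3 := by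
              gcongr; exact_mod_cast abs_moebius_le_one
          _ ≤ (d * (1 + Real.log n)) ^ 3 := by rw [one_mul]; gcongr; exact hσ d hd
    _ ≤ (n : ℝ)⁻¹ * ∑ d ∈ n.divisors, n ^ 2 * d * (1 + Real.log n) ^ 3 := by
        gcongr with d hd
        rw [mul_pow, pow_succ]
        gcongr
        exact_mod_cast Nat.divisor_le hd
    _ = n * (1 + Real.log n) ^ 3 * σ 1 n := by
        rw [← Finset.sum_mul, ← Finset.mul_sum, sigma_one_apply, Nat.cast_sum]
        field_simp
    _ ≤ n * (1 + Real.log n) ^ 3 * (n * (1 + Real.log n)) := by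
        gcongr; exact sigma_one_le_mul_one_add_log n
    _ = n ^ 2 * (1 + Real.log n) ^ 4 := by ring

theorem LSeriesSummable_tripleOrbitCount {s : ℂ} (hs : 3 < s.re) :
    LSeriesSummable tripleOrbitCount s := by
  set ε := (s.re - 3) / 2 with hε_def
  have hε : 0 < ε := by positivity
  refine LSeriesSummable_of_le_const_mul_rpow (x := 3 + ε) (by linarith)
    ⟨(1 + 1 / (ε / 4)) ^ 4, fun n hn ↦ ?_⟩
  have hn₁ : (1 : ℝ) ≤ n := by exact_mod_cast Nat.one_le_iff_ne_zero.mpr hn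
  have hlog : 0 ≤ 1 + Real.log n := by have := Real.log_natCast_nonneg n; linarith
  calc ‖tripleOrbitCount n‖ ≤ n ^ 2 * (1 + Real.log n) ^ 4 := norm_tripleOrbitCount_le n
    _ ≤ n ^ 2 * ((1 + 1 / (ε / 4)) * n ^ (ε / 4)) ^ 4 := by
        gcongr; exact one_add_log_le_mul_rpow (by positivity) hn₁
    _ = (1 + 1 / (ε / 4)) ^ 4 * n ^ (3 + ε - 1) := by
        rw [show 3 + ε - 1 = 2 + ε / 4 * (4 : ℕ) by push_cast; ring,
          Real.rpow_add (by positivity), Real.rpow_mul (by positivity), Real.rpow_natCast,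
          Real.rpow_ofNat]
        ring

theorem hasSum_term_tripleOrbitCount_prime_pow {p : ℕ} (hp : p.Prime) {s : ℂ} (hs : 2 < s.re) :
    HasSum (fun e ↦ term tripleOrbitCount s (p ^ e))
      ((1 - (p : ℂ) ^ (-s))⁻¹ * (1 - (p : ℂ) ^ (-(s - 1)))⁻¹ * (1 - (p : ℂ) ^ (-(s - 2)))⁻¹ *
        (1 + (2 * p + 2) * (p : ℂ) ^ (-s) + (p : ℂ) ^ (1 - 2 * s))) := by
  have hp₀ : (p : ℂ) ≠ 0 := Nat.cast_ne_zero.mpr hp.ne_zero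
  have hcpow (k : ℕ) : (p : ℂ) ^ (-(s - k)) = p ^ k * p ^ (-s) := by
    rw [show -(s - k) = k + -s by ring, Complex.cpow_add _ _ hp₀, Complex.cpow_natCast]
  have hX (k : ℕ) (hk : k < s.re) : ‖(p : ℂ) ^ k * p ^ (-s)‖ < 1 :=
    hcpow k ▸ norm_natCast_cpow_lt_one hp.one_lt (by simpa using hk)
  have hterm (e : ℕ) :
      term tripleOrbitCount s (p ^ e) = tripleOrbitCount (p ^ e) * ((p : ℂ) ^ (-s)) ^ e := by
    rw [term_of_ne_zero (pow_ne_zero _ hp.ne_zero), Nat.cast_pow,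
      ← Complex.natCast_cpow_natCast_mul, Complex.cpow_nat_mul, Complex.cpow_neg, inv_pow,
      div_eq_mul_inv]
  have hcpow₁ : (p : ℂ) ^ (-(s - 1)) = p * p ^ (-s) := by simpa using hcpow 1
  have hcpow₂ : (p : ℂ) ^ (-(s - 2)) = p ^ 2 * p ^ (-s) := by simpa using hcpow 2
  rw [hcpow₁, hcpow₂, show 1 - 2 * s = 1 + -s + -s by ring, Complex.cpow_add _ _ hp₀,
    Complex.cpow_add _ _ hp₀, Complex.cpow_one, mul_assoc (p : ℂ), ← sq]
  simp_rw [hterm]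
  exact hasSum_mul_geometric_of_cube_sub_cube hp₀ (by exact_mod_cast hp.one_lt.ne')
    (by simpa using hX 0 (by simp; linarith)) (by simpa using hX 1 (by simp; linarith))
    (hX 2 (by simp; linarith)) (by simpa using tripleOrbitCount_prime_pow hp)

/-- For a map `T` with exactly one closed orbit of each length, the orbit Dirichlet
series of `T × T × T` satisfies, for `Re s > 3`,
`∑_{n ≥ 1} O(n) n^{-s} = ζ(s)ζ(s-1)ζ(s-2) ∏_p (1 + (2p+2)p^{-s} + p^{1-2s})`,
where `O(n) = (1/n) ∑_{d ∣ n} μ(n/d) σ₁(d)³`. -/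
theorem triple_product_orbit_dirichlet_series (O : ℕ → ℂ)
    (hO : ∀ n : ℕ, 1 ≤ n →
      O n = (1 / (n : ℂ)) * ∑ d ∈ n.divisors, (ArithmeticFunction.moebius (n / d) : ℂ) * (sigma 1 d : ℂ) ^ 3)
    (s : ℂ) (hs : 3 < s.re) :
    LSeries O s = riemannZeta s * riemannZeta (s - 1) * riemannZeta (s - 2) *
      ∏' p : Nat.Primes,
        (1 + (2 * (p : ℂ) + 2) * (p : ℂ) ^ (-s) + (p : ℂ) ^ (1 - 2 * s)) := by
  have hLSeries : LSeries O s = LSeries tripleOrbitCount s :=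
    LSeries_congr (fun hn ↦ by rw [hO _ (Nat.one_le_iff_ne_zero.mpr hn), tripleOrbitCount_apply]) s
  have hEuler := isMultiplicative_tripleOrbitCount.LSeries_eulerProduct_hasProd
    (LSeriesSummable_tripleOrbitCount hs)
  have hLocal : (fun p : Nat.Primes ↦ ∑' e, term tripleOrbitCount s (p ^ e)) = fun p ↦ _ :=
    funext fun p ↦ (hasSum_term_tripleOrbitCount_prime_pow p.prop (by linarith)).tsum_eq
  have hζ₀ := riemannZeta_eulerProduct_hasProd (s := s) (by linarith)
  have hζ₁ := riemannZeta_eulerProduct_hasProd (s := s - 1) (by simp; linarith)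
  have hζ₂ := riemannZeta_eulerProduct_hasProd (s := s - 2) (by simp; linarith)
  rw [hLocal] at hEuler
  rw [hLSeries, hEuler.unique (((hζ₀.mul hζ₁).mul hζ₂).mul
    (multipliable_one_add_prime_cpow (by linarith)).hasProd)]
end
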